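/- arXiv:1001.3312 — 2 statements merged into one kernel-verified Lean document; each statement's English description precedes it below -/
import Mathlib

section
/- Under the same hypotheses — V : (0,∞) → M₂(ℂ) continuous; u₁, u₂, ψ₀ twice differentiable invertible matrix solutions of −u_j'' + Vu_j = E_j u_j and −ψ₀'' + Vψ₀ = k²ψ₀; w_j = u_j'u_j⁻¹, w_k = ψ₀'ψ₀⁻¹; w₂−w₁ invertible everywhere; W₂ = (E₁−E₂)(w₂−w₁)⁻¹; ũ₂ = (w₁−w₂)u₂; w̃₂ = ũ₂'ũ₂⁻¹ — the transformed solution also admits the symmetric form: (w̃₂ − ∂_r)((w₁ − ∂_r)ψ₀)(r) = [(−k² + (E₁+E₂)/2)·I + W₂(r)((w₁(r)+w₂(r))/2 − w_k(r))] ψ₀(r) for all r. -/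
open Matrix Set

/-!
The superpotential `w = u'u⁻¹` of a solution of `-u'' + Vu = Eu` satisfies the matrix Riccati
equation `w' = V - E - w²`. Applied to `w₁` and `w₂` it gives `(W₂ - w₁)ũ₂ = ũ₂'`, that is
`w̃₂ = W₂ - w₁`. What remains is algebra: substitute `ψ₀'' = (V - k²)ψ₀` and `ψ₀' = w_k ψ₀`, and
use `W₂(w₂ - w₁) = E₁ - E₂` to split `W₂w₁ψ₀` symmetrically into `W₂(w₁ + w₂)ψ₀/2` and a scalar.
-/

-- Any submultiplicative norm would do: it makes matrices a normed `ℝ`-algebra, so that the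
-- product and inverse rules for `HasDerivAt` apply.
attribute [local instance] Matrix.linftyOpNormedRing Matrix.linftyOpNormedAlgebra

section Algebra

variable {R : Type*} [Ring R] [Algebra ℂ R]

theorem twofold_superpotential_sub_mul_eq {W w₁ w₂ u V : R} {E₁ E₂ : ℂ}
    (hW : W * (w₂ - w₁) = (E₁ - E₂) • 1) :
    (W - w₁) * ((w₁ - w₂) * u)
      = ((V - E₁ • 1 - w₁ * w₁) - (V - E₂ • 1 - w₂ * w₂)) * u + (w₁ - w₂) * (w₂ * u) := by
  have hW' : W * (w₁ - w₂) = (E₂ - E₁) • 1 := by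
    rw [← neg_sub, mul_neg, hW, ← neg_smul, neg_sub]
  rw [← mul_assoc, sub_mul, hW']
  simp only [sub_mul, mul_sub, sub_smul, smul_mul_assoc, one_mul, mul_assoc]
  abel

theorem twofold_action_eq_symmetric_form {W w₁ w₂ wk ψ ψ' ψ'' V : R} {E₁ E₂ k2 : ℂ}
    (hW : W * (w₂ - w₁) = (E₁ - E₂) • 1) (hwk : wk * ψ = ψ') (hψ : -ψ'' + V * ψ = k2 • ψ) :
    (W - w₁) * (w₁ * ψ - ψ') - ((V - E₁ • 1 - w₁ * w₁) * ψ + w₁ * ψ' - ψ'')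
      = ((-k2 + (E₁ + E₂) / 2) • 1 + W * ((2:ℂ)⁻¹ • (w₁ + w₂) - wk)) * ψ := by
  obtain rfl : ψ'' = V * ψ - k2 • ψ := by rw [← hψ]; abel
  subst hwk
  have hWw₂ : W * (w₂ * ψ) = W * (w₁ * ψ) + (E₁ - E₂) • ψ := by
    rw [← mul_assoc, ← mul_assoc, ← sub_eq_iff_eq_add', ← sub_mul, ← mul_sub, hW,
      smul_mul_assoc, one_mul]
  simp only [sub_mul, mul_sub, add_mul, mul_add, smul_mul_assoc, mul_smul_comm, mul_assoc,
    one_mul, smul_add]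
  rw [hWw₂]
  module

end Algebra

section Calculus

variable {n : Type*} [Fintype n] [DecidableEq n]

theorem hasDerivAt_matrix_iff {A : ℝ → Matrix n n ℂ} {A' : Matrix n n ℂ} {r : ℝ} :
    HasDerivAt A A' r ↔ ∀ i j, HasDerivAt (fun t => A t i j) (A' i j) r := by
  let e : Matrix n n ℂ ≃L[ℝ] (n → n → ℂ) :=
    (Matrix.ofLinearEquiv ℝ).symm.toContinuousLinearEquiv
  have he : HasDerivAt A A' r ↔ HasDerivAt (fun t => e (A t)) (e A') r :=
    ⟨fun h => e.hasFDerivAt.comp_hasDerivAt r h, fun h => e.symm.hasFDerivAt.comp_hasDerivAt r h⟩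
  rw [he, hasDerivAt_pi]
  exact forall_congr' fun i => hasDerivAt_pi

theorem HasDerivAt.matrix_inv {A : ℝ → Matrix n n ℂ} {A' : Matrix n n ℂ} {r : ℝ}
    (hA : HasDerivAt A A' r) (hunit : IsUnit (A r)) :
    HasDerivAt (fun t => (A t)⁻¹) (-((A r)⁻¹ * A' * (A r)⁻¹)) r := by
  obtain ⟨U, hU⟩ := hunit
  have h := (hasFDerivAt_ringInverse (𝕜 := ℝ) U).comp_hasDerivAt_of_eq r hA hU
  have hfun : (fun t => (A t)⁻¹) = Ring.inverse ∘ A :=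
    funext fun t => nonsing_inv_eq_ringInverse _
  have hinv : (A r)⁻¹ = ↑U⁻¹ := by rw [← hU, coe_units_inv]
  rw [hfun, hinv]
  exact h.congr_deriv (by simp)

theorem hasDerivAt_superpotential_of_schrodinger {u u' w : ℝ → Matrix n n ℂ}
    {u'' V : Matrix n n ℂ} {E : ℂ} {r : ℝ} (hw : ∀ t, w t = u' t * (u t)⁻¹)
    (hu : HasDerivAt u (u' r) r) (hu' : HasDerivAt u' u'' r)
    (hschr : -u'' + V * u r = E • u r) (hunit : IsUnit (u r)) :
    HasDerivAt w (V - E • 1 - w r * w r) r := by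
  have hdet := (isUnit_iff_isUnit_det _).mp hunit
  obtain rfl : u'' = V * u r - E • u r := by rw [← hschr]; abel
  rw [funext hw]
  refine (hu'.fun_mul (hu.matrix_inv hunit)).congr_deriv ?_
  rw [sub_mul, mul_nonsing_inv_cancel_right _ _ hdet, smul_mul_assoc,
    mul_nonsing_inv _ hdet]
  noncomm_ring

theorem transformed_superpotential_eq {u w₁ w₂ tu : ℝ → Matrix n n ℂ} {tu' V W : Matrix n n ℂ}
    {E₁ E₂ : ℂ} {r : ℝ} (hw₁ : HasDerivAt w₁ (V - E₁ • 1 - w₁ r * w₁ r) r)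
    (hw₂ : HasDerivAt w₂ (V - E₂ • 1 - w₂ r * w₂ r) r) (hu : HasDerivAt u (w₂ r * u r) r)
    (htu : ∀ t, tu t = (w₁ t - w₂ t) * u t) (htu' : HasDerivAt tu tu' r)
    (hunit : IsUnit (u r)) (hΔ : IsUnit (w₂ r - w₁ r)) (hW : W * (w₂ r - w₁ r) = (E₁ - E₂) • 1) :
    tu' * (tu r)⁻¹ = W - w₁ r := by
  have htu_unit : IsUnit (tu r) := by
    rw [htu, ← neg_sub]
    exact hΔ.neg.mul hunit
  have htu'_eq : tu' = (W - w₁ r) * tu r := by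
    rw [htu, twofold_superpotential_sub_mul_eq (V := V) hW]
    refine htu'.unique ?_
    rw [funext htu]
    exact (hw₁.fun_sub hw₂).fun_mul hu
  rw [htu'_eq, mul_nonsing_inv_cancel_right _ _ ((isUnit_iff_isUnit_det _).mp htu_unit)]

end Calculus

theorem twofold_SUSY_action_symmetric_form_general
    (V u₁ u₁' u₁'' u₂ u₂' u₂'' ψ₀ ψ₀' ψ₀'' : ℝ → Matrix (Fin 2) (Fin 2) ℂ)
    (E₁ E₂ k2 : ℂ)
    (hu₁ : ∀ r ∈ Ioi (0:ℝ), ∀ i j, HasDerivAt (fun t => u₁ t i j) (u₁' r i j) r)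
    (hu₁' : ∀ r ∈ Ioi (0:ℝ), ∀ i j, HasDerivAt (fun t => u₁' t i j) (u₁'' r i j) r)
    (hu₂ : ∀ r ∈ Ioi (0:ℝ), ∀ i j, HasDerivAt (fun t => u₂ t i j) (u₂' r i j) r)
    (hu₂' : ∀ r ∈ Ioi (0:ℝ), ∀ i j, HasDerivAt (fun t => u₂' t i j) (u₂'' r i j) r)
    (hψ₀ : ∀ r ∈ Ioi (0:ℝ), ∀ i j, HasDerivAt (fun t => ψ₀ t i j) (ψ₀' r i j) r)
    (hψ₀' : ∀ r ∈ Ioi (0:ℝ), ∀ i j, HasDerivAt (fun t => ψ₀' t i j) (ψ₀'' r i j) r)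
    (heq₁ : ∀ r ∈ Ioi (0:ℝ), -u₁'' r + V r * u₁ r = E₁ • u₁ r)
    (heq₂ : ∀ r ∈ Ioi (0:ℝ), -u₂'' r + V r * u₂ r = E₂ • u₂ r)
    (heqψ : ∀ r ∈ Ioi (0:ℝ), -ψ₀'' r + V r * ψ₀ r = k2 • ψ₀ r)
    (hinv₁ : ∀ r ∈ Ioi (0:ℝ), IsUnit (u₁ r))
    (hinv₂ : ∀ r ∈ Ioi (0:ℝ), IsUnit (u₂ r))
    (hinvψ : ∀ r ∈ Ioi (0:ℝ), IsUnit (ψ₀ r))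
    (w₁ w₂ wk : ℝ → Matrix (Fin 2) (Fin 2) ℂ)
    (hw₁ : ∀ r, w₁ r = u₁' r * (u₁ r)⁻¹)
    (hw₂ : ∀ r, w₂ r = u₂' r * (u₂ r)⁻¹)
    (hwk : ∀ r, wk r = ψ₀' r * (ψ₀ r)⁻¹)
    (hinvw : ∀ r ∈ Ioi (0:ℝ), IsUnit (w₂ r - w₁ r))
    (W₂ : ℝ → Matrix (Fin 2) (Fin 2) ℂ)
    (hW₂ : ∀ r, W₂ r = (E₁ - E₂) • (w₂ r - w₁ r)⁻¹)
    (tu₂ tu₂' : ℝ → Matrix (Fin 2) (Fin 2) ℂ)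
    (htu₂ : ∀ r, tu₂ r = (w₁ r - w₂ r) * u₂ r)
    (htu₂' : ∀ r ∈ Ioi (0:ℝ), ∀ i j, HasDerivAt (fun t => tu₂ t i j) (tu₂' r i j) r)
    (tw₂ : ℝ → Matrix (Fin 2) (Fin 2) ℂ)
    (htw₂ : ∀ r, tw₂ r = tu₂' r * (tu₂ r)⁻¹)
    (g g' : ℝ → Matrix (Fin 2) (Fin 2) ℂ)
    (hg : ∀ r, g r = w₁ r * ψ₀ r - ψ₀' r)
    (hg' : ∀ r ∈ Ioi (0:ℝ), ∀ i j, HasDerivAt (fun t => g t i j) (g' r i j) r) :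
    ∀ r ∈ Ioi (0:ℝ),
      tw₂ r * g r - g' r
        = ((-k2 + (E₁ + E₂) / 2) • (1 : Matrix (Fin 2) (Fin 2) ℂ)
            + W₂ r * ((2:ℂ)⁻¹ • (w₁ r + w₂ r) - wk r)) * ψ₀ r := by
  intro r hr
  simp only [← hasDerivAt_matrix_iff] at hu₁ hu₁' hu₂ hu₂' hψ₀ hψ₀' htu₂' hg'
  have hw₁r := hasDerivAt_superpotential_of_schrodinger hw₁ (hu₁ r hr) (hu₁' r hr) (heq₁ r hr)
    (hinv₁ r hr)
  have hw₂r := hasDerivAt_superpotential_of_schrodinger hw₂ (hu₂ r hr) (hu₂' r hr) (heq₂ r hr)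
    (hinv₂ r hr)
  have hWΔ : W₂ r * (w₂ r - w₁ r) = (E₁ - E₂) • 1 := by
    rw [hW₂, smul_mul_assoc, nonsing_inv_mul _ ((isUnit_iff_isUnit_det _).mp (hinvw r hr))]
  have hu₂r : HasDerivAt u₂ (w₂ r * u₂ r) r := by
    rw [hw₂, nonsing_inv_mul_cancel_right _ _ ((isUnit_iff_isUnit_det _).mp (hinv₂ r hr))]
    exact hu₂ r hr
  have htw₂r : tw₂ r = W₂ r - w₁ r := by
    rw [htw₂]
    exact transformed_superpotential_eq hw₁r hw₂r hu₂r htu₂ (htu₂' r hr) (hinv₂ r hr) (hinvw r hr)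
      hWΔ
  have hg'r : g' r = (V r - E₁ • 1 - w₁ r * w₁ r) * ψ₀ r + w₁ r * ψ₀' r - ψ₀'' r := by
    refine (hg' r hr).unique ?_
    rw [funext hg]
    exact (hw₁r.fun_mul (hψ₀ r hr)).fun_sub (hψ₀' r hr)
  have hwkψ : wk r * ψ₀ r = ψ₀' r := by
    rw [hwk, nonsing_inv_mul_cancel_right _ _ ((isUnit_iff_isUnit_det _).mp (hinvψ r hr))]
  rw [htw₂r, hg, hg'r]
  exact twofold_action_eq_symmetric_form hWΔ hwkψ (heqψ r hr)

/-- Action of the two-fold SUSY transformation operator `L = (w̃₂ - ∂)(w₁ - ∂)` on a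
matrix solution `ψ₀` of the initial Schrödinger equation:
`Lψ₀ = [(-k² + (E₁+E₂)/2)·1 + W₂((w₁+w₂)/2 - w_k)]ψ₀`, with `W₂ = (E₁-E₂)(w₂-w₁)⁻¹`. -/
theorem twofold_SUSY_action_symmetric_form
    (V u₁ u₁' u₁'' u₂ u₂' u₂'' ψ₀ ψ₀' ψ₀'' : ℝ → Matrix (Fin 2) (Fin 2) ℂ)
    (E₁ E₂ k2 : ℂ)
    (hV : ContinuousOn V (Ioi 0))
    (hu₁ : ∀ r ∈ Ioi (0:ℝ), ∀ i j, HasDerivAt (fun t => u₁ t i j) (u₁' r i j) r)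
    (hu₁' : ∀ r ∈ Ioi (0:ℝ), ∀ i j, HasDerivAt (fun t => u₁' t i j) (u₁'' r i j) r)
    (hu₂ : ∀ r ∈ Ioi (0:ℝ), ∀ i j, HasDerivAt (fun t => u₂ t i j) (u₂' r i j) r)
    (hu₂' : ∀ r ∈ Ioi (0:ℝ), ∀ i j, HasDerivAt (fun t => u₂' t i j) (u₂'' r i j) r)
    (hψ₀ : ∀ r ∈ Ioi (0:ℝ), ∀ i j, HasDerivAt (fun t => ψ₀ t i j) (ψ₀' r i j) r)
    (hψ₀' : ∀ r ∈ Ioi (0:ℝ), ∀ i j, HasDerivAt (fun t => ψ₀' t i j) (ψ₀'' r i j) r)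
    (heq₁ : ∀ r ∈ Ioi (0:ℝ), -u₁'' r + V r * u₁ r = E₁ • u₁ r)
    (heq₂ : ∀ r ∈ Ioi (0:ℝ), -u₂'' r + V r * u₂ r = E₂ • u₂ r)
    (heqψ : ∀ r ∈ Ioi (0:ℝ), -ψ₀'' r + V r * ψ₀ r = k2 • ψ₀ r)
    (hinv₁ : ∀ r ∈ Ioi (0:ℝ), IsUnit (u₁ r))
    (hinv₂ : ∀ r ∈ Ioi (0:ℝ), IsUnit (u₂ r))
    (hinvψ : ∀ r ∈ Ioi (0:ℝ), IsUnit (ψ₀ r))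
    (w₁ w₂ wk : ℝ → Matrix (Fin 2) (Fin 2) ℂ)
    (hw₁ : ∀ r, w₁ r = u₁' r * (u₁ r)⁻¹)
    (hw₂ : ∀ r, w₂ r = u₂' r * (u₂ r)⁻¹)
    (hwk : ∀ r, wk r = ψ₀' r * (ψ₀ r)⁻¹)
    (hinvw : ∀ r ∈ Ioi (0:ℝ), IsUnit (w₂ r - w₁ r))
    (W₂ : ℝ → Matrix (Fin 2) (Fin 2) ℂ)
    (hW₂ : ∀ r, W₂ r = (E₁ - E₂) • (w₂ r - w₁ r)⁻¹)
    (tu₂ tu₂' : ℝ → Matrix (Fin 2) (Fin 2) ℂ)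
    (htu₂ : ∀ r, tu₂ r = (w₁ r - w₂ r) * u₂ r)
    (htu₂' : ∀ r ∈ Ioi (0:ℝ), ∀ i j, HasDerivAt (fun t => tu₂ t i j) (tu₂' r i j) r)
    (tw₂ : ℝ → Matrix (Fin 2) (Fin 2) ℂ)
    (htw₂ : ∀ r, tw₂ r = tu₂' r * (tu₂ r)⁻¹)
    (g g' : ℝ → Matrix (Fin 2) (Fin 2) ℂ)
    (hg : ∀ r, g r = w₁ r * ψ₀ r - ψ₀' r)
    (hg' : ∀ r ∈ Ioi (0:ℝ), ∀ i j, HasDerivAt (fun t => g t i j) (g' r i j) r) :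
    ∀ r ∈ Ioi (0:ℝ),
      tw₂ r * g r - g' r
        = ((-k2 + (E₁ + E₂) / 2) • (1 : Matrix (Fin 2) (Fin 2) ℂ)
            + W₂ r * ((2:ℂ)⁻¹ • (w₁ r + w₂ r) - wk r)) * ψ₀ r :=
  twofold_SUSY_action_symmetric_form_general V u₁ u₁' u₁'' u₂ u₂' u₂'' ψ₀ ψ₀' ψ₀'' E₁ E₂ k2 hu₁ hu₁'
    hu₂ hu₂' hψ₀ hψ₀' heq₁ heq₂ heqψ hinv₁ hinv₂ hinvψ w₁ w₂ wk hw₁ hw₂ hwk hinvw W₂ hW₂ tu₂ tu₂'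
    htu₂ htu₂' tw₂ htw₂ g g' hg hg'
end

section
/- Let V₀ : (0,∞) → M₂(ℂ) be continuous, E₁, E₂ ∈ ℂ, and let u₁, u₂ : (0,∞) → M₂(ℂ) be twice differentiable invertible matrix solutions of −u_j'' + V₀u_j = E_j u_j. Set w₁ = u₁'u₁⁻¹, V₁ = V₀ − 2w₁', ũ₂ = w₁u₂ − u₂', assume ũ₂(r) is invertible for all r, and set w̃₂ = ũ₂'ũ₂⁻¹ and V₂ = V₁ − 2w̃₂'. Then for any k² ∈ ℂ and any twice differentiable function ψ with −ψ'' + V₀ψ = k²ψ, the function φ = (w̃₂ − ∂_r)((w₁ − ∂_r)ψ) satisfies −φ'' + V₂φ = k²φ for all r. -/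
/-!
If `u` is an invertible solution of `-u'' + V u = E u`, then `w = u' u⁻¹` satisfies the Riccati
equation `w' = V - E - w²`, and this alone makes `(w - ∂)ψ` a solution of the Schrödinger equation
with potential `V - 2w'` at the energy of `ψ`. The two-fold transformation is this step done twice:
first with seed `u₁` on `V₀`, then on `V₁` with the seed `ũ₂ = (w₁ - ∂)u₂`, which the first step
has already made a solution for `V₁`.
-/

open Matrix Set Filter

variable {𝕜 : Type*} [NormedField 𝕜] [NormedAlgebra ℝ 𝕜] {l m n : Type*}

def HasEntrywiseDerivAt (A : ℝ → Matrix m n 𝕜) (A' : Matrix m n 𝕜) (r : ℝ) : Prop :=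
  ∀ i j, HasDerivAt (fun t => A t i j) (A' i j) r

namespace HasEntrywiseDerivAt

variable {A B : ℝ → Matrix m n 𝕜} {A' B' : Matrix m n 𝕜} {r : ℝ}

theorem sub (hA : HasEntrywiseDerivAt A A' r) (hB : HasEntrywiseDerivAt B B' r) :
    HasEntrywiseDerivAt (fun t => A t - B t) (A' - B') r :=
  fun i j => (hA i j).sub (hB i j)

theorem const_smul (c : 𝕜) (hA : HasEntrywiseDerivAt A A' r) :
    HasEntrywiseDerivAt (fun t => c • A t) (c • A') r :=
  fun i j => (hA i j).const_mul c

theorem mul [Fintype n] {C : ℝ → Matrix n l 𝕜} {C' : Matrix n l 𝕜}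
    (hA : HasEntrywiseDerivAt A A' r) (hC : HasEntrywiseDerivAt C C' r) :
    HasEntrywiseDerivAt (fun t => A t * C t) (A' * C r + A r * C') r := by
  intro i j
  simp only [Matrix.mul_apply, Matrix.add_apply, ← Finset.sum_add_distrib]
  exact HasDerivAt.fun_sum fun k _ => (hA i k).mul (hC k j)

theorem unique (hA : HasEntrywiseDerivAt A A' r) (hA₁ : HasEntrywiseDerivAt A B' r) : A' = B' :=
  Matrix.ext fun i j => (hA i j).unique (hA₁ i j)

theorem congr_of_eventuallyEq (hA : HasEntrywiseDerivAt A A' r) (h : B =ᶠ[nhds r] A) :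
    HasEntrywiseDerivAt B A' r :=
  fun i j => (hA i j).congr_of_eventuallyEq (h.mono fun _ ht => congrArg (fun M => M i j) ht)

end HasEntrywiseDerivAt

structure IsSchrodingerSolOn [Fintype m] (s : Set ℝ) (V : ℝ → Matrix m m 𝕜) (E : 𝕜)
    (ψ ψ' ψ'' : ℝ → Matrix m n 𝕜) : Prop where
  hasDeriv : ∀ r ∈ s, HasEntrywiseDerivAt ψ (ψ' r) r
  hasDeriv' : ∀ r ∈ s, HasEntrywiseDerivAt ψ' (ψ'' r) r
  eqn : ∀ r ∈ s, -ψ'' r + V r * ψ r = E • ψ r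

namespace IsSchrodingerSolOn

variable [Fintype m] {s : Set ℝ} {V : ℝ → Matrix m m 𝕜} {E k : 𝕜} {ψ ψ' ψ'' : ℝ → Matrix m n 𝕜}

theorem second_deriv_eq (h : IsSchrodingerSolOn s V E ψ ψ' ψ'') {r : ℝ} (hr : r ∈ s) :
    ψ'' r = V r * ψ r - E • ψ r := by
  rw [← h.eqn r hr]; abel

theorem of_hasEntrywiseDerivAt (hs : IsOpen s) (h : IsSchrodingerSolOn s V E ψ ψ' ψ'')
    {ψ₁' : ℝ → Matrix m n 𝕜} (hψ₁ : ∀ r ∈ s, HasEntrywiseDerivAt ψ (ψ₁' r) r) :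
    IsSchrodingerSolOn s V E ψ ψ₁' ψ'' where
  hasDeriv := hψ₁
  hasDeriv' r hr := (h.hasDeriv' r hr).congr_of_eventuallyEq <|
    eventually_of_mem (hs.mem_nhds hr) fun t ht => ((h.hasDeriv t ht).unique (hψ₁ t ht)).symm
  eqn := h.eqn

theorem hasDerivAt_deriv (hs : IsOpen s) (h : IsSchrodingerSolOn s V E ψ ψ' ψ'') {r : ℝ}
    (hr : r ∈ s) (i : m) (j : n) : HasDerivAt (deriv fun t => ψ t i j) (ψ'' r i j) r :=
  (h.hasDeriv' r hr i j).congr_of_eventuallyEq <|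
    eventually_of_mem (hs.mem_nhds hr) fun t ht => (h.hasDeriv t ht i j).deriv

variable [DecidableEq m]

theorem riccati (hs : IsOpen s) {u u' u'' w w' : ℝ → Matrix m m 𝕜}
    (hu : IsSchrodingerSolOn s V E u u' u'') (hinv : ∀ r ∈ s, IsUnit (u r))
    (hw : ∀ r ∈ s, w r = u' r * (u r)⁻¹) (hw' : ∀ r ∈ s, HasEntrywiseDerivAt w (w' r) r) :
    ∀ r ∈ s, w' r = V r - E • 1 - w r * w r := by
  have hu' : ∀ r ∈ s, u' r = w r * u r := fun r hr => by
    rw [hw r hr, nonsing_inv_mul_cancel_right _ _ ((isUnit_iff_isUnit_det _).mp (hinv r hr))]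
  intro r hr
  have hu'' : u'' r = w' r * u r + w r * u' r :=
    (hu.hasDeriv' r hr).unique <| ((hw' r hr).mul (hu.hasDeriv r hr)).congr_of_eventuallyEq <|
      eventually_of_mem (hs.mem_nhds hr) hu'
  refine (hinv r hr).mul_right_cancel ?_
  calc w' r * u r = u'' r - w r * u' r := by rw [hu'']; abel
    _ = (V r - E • 1 - w r * w r) * u r := by
      rw [hu.second_deriv_eq hr, hu' r hr]
      simp only [sub_mul, smul_mul, one_mul, Matrix.mul_assoc]

theorem darboux (hs : IsOpen s) (hψ : IsSchrodingerSolOn s V k ψ ψ' ψ'')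
    {w w' V₁ : ℝ → Matrix m m 𝕜} (hw : ∀ r ∈ s, HasEntrywiseDerivAt w (w' r) r)
    (hric : ∀ r ∈ s, w' r = V r - E • 1 - w r * w r)
    (hV₁ : ∀ r ∈ s, V₁ r = V r - (2 : 𝕜) • w' r)
    {G : ℝ → Matrix m n 𝕜} (hG : ∀ r ∈ s, G r = w r * ψ r - ψ' r) :
    IsSchrodingerSolOn s V₁ k G (fun r => (k - E) • ψ r - w r * G r)
      (fun r => V₁ r * G r - k • G r) := by
  have hG' : ∀ r ∈ s, HasEntrywiseDerivAt G ((k - E) • ψ r - w r * G r) r := by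
    intro r hr
    have h := ((hw r hr).mul (hψ.hasDeriv r hr)).sub (hψ.hasDeriv' r hr)
    convert h.congr_of_eventuallyEq (eventually_of_mem (hs.mem_nhds hr) hG) using 1
    rw [hG r hr, hric r hr, hψ.second_deriv_eq hr]
    simp only [Matrix.sub_mul, Matrix.mul_sub, Matrix.smul_mul, Matrix.one_mul, ← Matrix.mul_assoc]
    module
  refine ⟨hG', fun r hr => ?_, fun r _ => by abel⟩
  convert ((hψ.hasDeriv r hr).const_smul (k - E)).sub ((hw r hr).mul (hG' r hr)) using 1
  have hψ' : ψ' r = w r * ψ r - G r := by rw [hG r hr]; abel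
  rw [hV₁ r hr, hψ', hric r hr]
  simp only [Matrix.sub_mul, Matrix.mul_sub, Matrix.smul_mul, Matrix.mul_smul,
    Matrix.one_mul, ← Matrix.mul_assoc, sub_smul, smul_sub]
  module

end IsSchrodingerSolOn

theorem secondOrder_SUSY_intertwining_general {n : ℕ}
    (V₀ u₁ u₁' u₁'' u₂ u₂' u₂'' : ℝ → Matrix (Fin 2) (Fin 2) ℂ) (E₁ E₂ : ℂ)
    (hu₁ : ∀ r ∈ Ioi (0:ℝ), ∀ i j, HasDerivAt (fun t => u₁ t i j) (u₁' r i j) r)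
    (hu₁' : ∀ r ∈ Ioi (0:ℝ), ∀ i j, HasDerivAt (fun t => u₁' t i j) (u₁'' r i j) r)
    (hu₂ : ∀ r ∈ Ioi (0:ℝ), ∀ i j, HasDerivAt (fun t => u₂ t i j) (u₂' r i j) r)
    (hu₂' : ∀ r ∈ Ioi (0:ℝ), ∀ i j, HasDerivAt (fun t => u₂' t i j) (u₂'' r i j) r)
    (hinv₁ : ∀ r ∈ Ioi (0:ℝ), IsUnit (u₁ r))
    (heq₁ : ∀ r ∈ Ioi (0:ℝ), -u₁'' r + V₀ r * u₁ r = E₁ • u₁ r)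
    (heq₂ : ∀ r ∈ Ioi (0:ℝ), -u₂'' r + V₀ r * u₂ r = E₂ • u₂ r)
    (w₁ w₁d V₁ : ℝ → Matrix (Fin 2) (Fin 2) ℂ)
    (hw₁ : ∀ r, w₁ r = u₁' r * (u₁ r)⁻¹)
    (hw₁d : ∀ r ∈ Ioi (0:ℝ), ∀ i j, HasDerivAt (fun t => w₁ t i j) (w₁d r i j) r)
    (hV₁ : ∀ r, V₁ r = V₀ r - (2:ℂ) • w₁d r)
    (tu₂ tu₂' : ℝ → Matrix (Fin 2) (Fin 2) ℂ)
    (htu₂ : ∀ r, tu₂ r = w₁ r * u₂ r - u₂' r)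
    (hinvt : ∀ r ∈ Ioi (0:ℝ), IsUnit (tu₂ r))
    (htu₂' : ∀ r ∈ Ioi (0:ℝ), ∀ i j, HasDerivAt (fun t => tu₂ t i j) (tu₂' r i j) r)
    (tw₂ tw₂d V₂ : ℝ → Matrix (Fin 2) (Fin 2) ℂ)
    (htw₂ : ∀ r, tw₂ r = tu₂' r * (tu₂ r)⁻¹)
    (htw₂d : ∀ r ∈ Ioi (0:ℝ), ∀ i j, HasDerivAt (fun t => tw₂ t i j) (tw₂d r i j) r)
    (hV₂ : ∀ r, V₂ r = V₁ r - (2:ℂ) • tw₂d r)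
    (k2 : ℂ) (ψ ψ' ψ'' : ℝ → Matrix (Fin 2) (Fin n) ℂ)
    (hψ : ∀ r ∈ Ioi (0:ℝ), ∀ i j, HasDerivAt (fun t => ψ t i j) (ψ' r i j) r)
    (hψ' : ∀ r ∈ Ioi (0:ℝ), ∀ i j, HasDerivAt (fun t => ψ' t i j) (ψ'' r i j) r)
    (hψeq : ∀ r ∈ Ioi (0:ℝ), -ψ'' r + V₀ r * ψ r = k2 • ψ r)
    (g g' : ℝ → Matrix (Fin 2) (Fin n) ℂ)
    (hg : ∀ r, g r = w₁ r * ψ r - ψ' r)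
    (hg' : ∀ r ∈ Ioi (0:ℝ), ∀ i j, HasDerivAt (fun t => g t i j) (g' r i j) r)
    (φ : ℝ → Matrix (Fin 2) (Fin n) ℂ)
    (hφ : ∀ r, φ r = tw₂ r * g r - g' r) :
    ∀ r ∈ Ioi (0:ℝ),
      (∀ i j, DifferentiableAt ℝ (fun t => φ t i j) r) ∧
      (∀ i j, HasDerivAt (deriv (fun t => φ t i j))
        ((V₂ r * φ r - k2 • φ r) i j) r) := by
  have hs : IsOpen (Ioi (0:ℝ)) := isOpen_Ioi
  have ric₁ := IsSchrodingerSolOn.riccati hs ⟨hu₁, hu₁', heq₁⟩ hinv₁ (fun r _ => hw₁ r) hw₁d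
  have solg := ((IsSchrodingerSolOn.mk hψ hψ' hψeq).darboux hs hw₁d ric₁ (fun r _ => hV₁ r)
    (fun r _ => hg r)).of_hasEntrywiseDerivAt hs hg'
  have soltu₂ := ((IsSchrodingerSolOn.mk hu₂ hu₂' heq₂).darboux hs hw₁d ric₁ (fun r _ => hV₁ r)
    (fun r _ => htu₂ r)).of_hasEntrywiseDerivAt hs htu₂'
  have ric₂ := soltu₂.riccati hs hinvt (fun r _ => htw₂ r) htw₂d
  have solφ := solg.darboux hs htw₂d ric₂ (fun r _ => hV₂ r) (fun r _ => hφ r)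
  exact fun r hr => ⟨fun i j => (solφ.hasDeriv r hr i j).differentiableAt,
    solφ.hasDerivAt_deriv hs hr⟩

/-- Second-order (two-fold) SUSY intertwining: if `-ψ'' + V₀ψ = k²ψ`, then
`φ = (w̃₂ - ∂)((w₁ - ∂)ψ)` satisfies `-φ'' + V₂φ = k²φ`, where the chain of two
first-order Darboux transformations goes through `V₁ = V₀ - 2w₁'` to
`V₂ = V₁ - 2w̃₂'`, with `w₁ = u₁'u₁⁻¹`, `ũ₂ = w₁u₂ - u₂'` and `w̃₂ = ũ₂'ũ₂⁻¹`. -/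
theorem secondOrder_SUSY_intertwining {n : ℕ}
    (V₀ u₁ u₁' u₁'' u₂ u₂' u₂'' : ℝ → Matrix (Fin 2) (Fin 2) ℂ) (E₁ E₂ : ℂ)
    (hV₀ : ContinuousOn V₀ (Ioi 0))
    (hu₁ : ∀ r ∈ Ioi (0:ℝ), ∀ i j, HasDerivAt (fun t => u₁ t i j) (u₁' r i j) r)
    (hu₁' : ∀ r ∈ Ioi (0:ℝ), ∀ i j, HasDerivAt (fun t => u₁' t i j) (u₁'' r i j) r)
    (hu₂ : ∀ r ∈ Ioi (0:ℝ), ∀ i j, HasDerivAt (fun t => u₂ t i j) (u₂' r i j) r)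
    (hu₂' : ∀ r ∈ Ioi (0:ℝ), ∀ i j, HasDerivAt (fun t => u₂' t i j) (u₂'' r i j) r)
    (hinv₁ : ∀ r ∈ Ioi (0:ℝ), IsUnit (u₁ r))
    (hinv₂ : ∀ r ∈ Ioi (0:ℝ), IsUnit (u₂ r))
    (heq₁ : ∀ r ∈ Ioi (0:ℝ), -u₁'' r + V₀ r * u₁ r = E₁ • u₁ r)
    (heq₂ : ∀ r ∈ Ioi (0:ℝ), -u₂'' r + V₀ r * u₂ r = E₂ • u₂ r)
    (w₁ w₁d V₁ : ℝ → Matrix (Fin 2) (Fin 2) ℂ)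
    (hw₁ : ∀ r, w₁ r = u₁' r * (u₁ r)⁻¹)
    (hw₁d : ∀ r ∈ Ioi (0:ℝ), ∀ i j, HasDerivAt (fun t => w₁ t i j) (w₁d r i j) r)
    (hV₁ : ∀ r, V₁ r = V₀ r - (2:ℂ) • w₁d r)
    (tu₂ tu₂' : ℝ → Matrix (Fin 2) (Fin 2) ℂ)
    (htu₂ : ∀ r, tu₂ r = w₁ r * u₂ r - u₂' r)
    (hinvt : ∀ r ∈ Ioi (0:ℝ), IsUnit (tu₂ r))
    (htu₂' : ∀ r ∈ Ioi (0:ℝ), ∀ i j, HasDerivAt (fun t => tu₂ t i j) (tu₂' r i j) r)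
    (tw₂ tw₂d V₂ : ℝ → Matrix (Fin 2) (Fin 2) ℂ)
    (htw₂ : ∀ r, tw₂ r = tu₂' r * (tu₂ r)⁻¹)
    (htw₂d : ∀ r ∈ Ioi (0:ℝ), ∀ i j, HasDerivAt (fun t => tw₂ t i j) (tw₂d r i j) r)
    (hV₂ : ∀ r, V₂ r = V₁ r - (2:ℂ) • tw₂d r)
    (k2 : ℂ) (ψ ψ' ψ'' : ℝ → Matrix (Fin 2) (Fin n) ℂ)
    (hψ : ∀ r ∈ Ioi (0:ℝ), ∀ i j, HasDerivAt (fun t => ψ t i j) (ψ' r i j) r)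
    (hψ' : ∀ r ∈ Ioi (0:ℝ), ∀ i j, HasDerivAt (fun t => ψ' t i j) (ψ'' r i j) r)
    (hψeq : ∀ r ∈ Ioi (0:ℝ), -ψ'' r + V₀ r * ψ r = k2 • ψ r)
    (g g' : ℝ → Matrix (Fin 2) (Fin n) ℂ)
    (hg : ∀ r, g r = w₁ r * ψ r - ψ' r)
    (hg' : ∀ r ∈ Ioi (0:ℝ), ∀ i j, HasDerivAt (fun t => g t i j) (g' r i j) r)
    (φ : ℝ → Matrix (Fin 2) (Fin n) ℂ)
    (hφ : ∀ r, φ r = tw₂ r * g r - g' r) :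
    ∀ r ∈ Ioi (0:ℝ),
      (∀ i j, DifferentiableAt ℝ (fun t => φ t i j) r) ∧
      (∀ i j, HasDerivAt (deriv (fun t => φ t i j))
        ((V₂ r * φ r - k2 • φ r) i j) r) :=
  secondOrder_SUSY_intertwining_general V₀ u₁ u₁' u₁'' u₂ u₂' u₂'' E₁ E₂ hu₁ hu₁' hu₂ hu₂' hinv₁
    heq₁ heq₂ w₁ w₁d V₁ hw₁ hw₁d hV₁ tu₂ tu₂' htu₂ hinvt htu₂' tw₂ tw₂d V₂ htw₂ htw₂d hV₂ k2 ψ ψ'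
    ψ'' hψ hψ' hψeq g g' hg hg' φ hφ
end
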